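/- Let $g : S^1 \to S^1$ be an orientation-preserving circle homeomorphism without fixed points, with lift $\widetilde{g}$ satisfying $\widetilde{y} < \widetilde{g}(\widetilde{y}) < \widetilde{y} + 1$ for all $\widetilde{y} \in \mathbb{R}$. Let $\nu_1$ be a $g$-invariant probability measure on $S^1$ and $\nu_2$ any probability measure on $S^1$ with lift $\widetilde{\nu}_2$. Then $\int_{S^1} \widetilde{\nu}_2([\widetilde{y}, \widetilde{g}(\widetilde{y}))) \, d\nu_1(y) = \rho(\widetilde{g})$, where $\widetilde{y} \in [0,1)$ denotes the standard lift of $y$. -/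

import Mathlib

/-!
Write `G y = ν₂L [y, gL y)`. It is 1-periodic, so it descends to the circle, and the
`g`-invariance of `ν₁` gives `∫ G ∘ gL^[k] = ∫ G` over `[0,1)` against `ν₁L` for every `k`.
Summing over `k < n` telescopes to `∫ ν₂L [y, gL^[n] y) = n ∫ G`. As `ν₂L` gives mass 1 to
every interval of length 1, `ν₂L [y, gL^[n] y)` is within 1 of `gL^[n] y - y`, hence within 2
of `gL^[n] 0` when `y ∈ [0,1)`. Dividing by `n`, `∫ G = lim gL^[n] 0 / n = ρ`.
-/

open MeasureTheory Set Filter Topology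

noncomputable section

/-- `νL` is the infinite-mass lift of the measure `ν` on the circle:
translation-by-1 invariant, and its restriction to `[0,1)` projects to `ν`. -/
def IsLift (ν : Measure UnitAddCircle) (νL : Measure ℝ) : Prop :=
  (∀ s : Set ℝ, νL ((· + 1) ⁻¹' s) = νL s) ∧
    Measure.map (fun x : ℝ => (x : UnitAddCircle)) (νL.restrict (Ico (0:ℝ) 1)) = ν

theorem IsLift.measure_Ico_zero_one {ν : Measure UnitAddCircle} [IsProbabilityMeasure ν]
    {νL : Measure ℝ} (h : IsLift ν νL) : νL (Ico 0 1) = 1 := by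
  simpa [Measure.map_apply AddCircle.measurable_mk' MeasurableSet.univ] using
    congrArg (· univ) h.2

open Function
open scoped ENNReal

section LinearOrder

variable {α : Type*} [LinearOrder α] [TopologicalSpace α] [OrderClosedTopology α]
  [MeasurableSpace α] [OpensMeasurableSpace α] {μ : Measure α}

theorem measure_Ico_add_measure_Ico {a b c : α} (hab : a ≤ b) (hbc : b ≤ c) :
    μ (Ico a b) + μ (Ico b c) = μ (Ico a c) := by
  rw [← measure_union Ico_disjoint_Ico_same measurableSet_Ico, Ico_union_Ico_eq_Ico hab hbc]

theorem Monotone.sum_measure_Ico {u : ℕ → α} (hu : Monotone u) (n : ℕ) :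
    ∑ k ∈ Finset.range n, μ (Ico (u k) (u (k + 1))) = μ (Ico (u 0) (u n)) := by
  induction n with
  | zero => simp
  | succ n ih =>
    rw [Finset.sum_range_succ, ih, measure_Ico_add_measure_Ico (hu n.zero_le) (hu n.le_succ)]

end LinearOrder

section PeriodicMeasure

variable {μ : Measure ℝ} (hμ : ∀ s : Set ℝ, μ ((· + 1) ⁻¹' s) = μ s)
include hμ

theorem measure_preimage_add_intCast (n : ℤ) (s : Set ℝ) : μ ((· + (n : ℝ)) ⁻¹' s) = μ s := by
  induction n using Int.induction_on with
  | zero => simp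
  | succ k ih =>
    have : (· + ((k + 1 : ℤ) : ℝ)) ⁻¹' s = (· + 1) ⁻¹' ((· + (k : ℝ)) ⁻¹' s) := by
      ext x; simp [add_right_comm, add_assoc]
    rw [this, hμ]; exact_mod_cast ih
  | pred k ih =>
    have : (· + ((-k : ℤ) : ℝ)) ⁻¹' s = (· + 1) ⁻¹' ((· + ((-k - 1 : ℤ) : ℝ)) ⁻¹' s) := by
      ext x; simp [add_assoc]
    rw [← ih, this, hμ]

theorem measure_Ico_add_intCast (n : ℤ) (a b : ℝ) : μ (Ico (a + n) (b + n)) = μ (Ico a b) := by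
  rw [← measure_preimage_add_intCast hμ n, preimage_add_const_Ico, add_sub_cancel_right,
    add_sub_cancel_right]

theorem measure_Ico_add_one (x : ℝ) : μ (Ico x (x + 1)) = μ (Ico 0 1) := by
  have hx : x ≤ ⌈x⌉ := Int.le_ceil x
  have hx1 : (⌈x⌉ : ℝ) ≤ x + 1 := (Int.ceil_lt_add_one x).le
  -- cut at `⌈x⌉` and translate the upper piece down by one
  calc μ (Ico x (x + 1)) = μ (Ico x ⌈x⌉) + μ (Ico ⌈x⌉ (x + 1)) :=
        (measure_Ico_add_measure_Ico hx hx1).symm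
    _ = μ (Ico x ⌈x⌉) + μ (Ico (⌈x⌉ - 1) x) := by
        rw [← measure_Ico_add_intCast hμ 1 (⌈x⌉ - 1) x]; norm_num
    _ = μ (Ico (⌈x⌉ - 1) ⌈x⌉) := by
        rw [add_comm, measure_Ico_add_measure_Ico (by linarith) hx]
    _ = μ (Ico 0 1) := by
        rw [← measure_Ico_add_intCast hμ (⌈x⌉ - 1) 0 1]; norm_num

variable (hμ1 : μ (Ico 0 1) = 1)
include hμ1

theorem measure_Ico_add_natCast (x : ℝ) (n : ℕ) : μ (Ico x (x + n)) = n := by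
  induction n with
  | zero => simp
  | succ n ih =>
    rw [Nat.cast_succ, Nat.cast_succ, ← add_assoc,
      ← measure_Ico_add_measure_Ico (b := x + n) (by simp) (by linarith), ih,
      measure_Ico_add_one hμ, hμ1]

theorem measure_Ico_ne_top (a b : ℝ) : μ (Ico a b) ≠ ⊤ := by
  have hb : b ≤ a + ⌈b - a⌉₊ := by linarith [Nat.le_ceil (b - a)]
  refine ne_top_of_le_ne_top ?_ (measure_mono (Ico_subset_Ico_right hb))
  rw [measure_Ico_add_natCast hμ hμ1]
  exact ENNReal.natCast_ne_top _

theorem isLocallyFiniteMeasure_of_periodic : IsLocallyFiniteMeasure μ :=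
  ⟨fun x => ⟨Ico (x - 1) (x + 1), Ico_mem_nhds (by linarith) (by linarith),
    (measure_Ico_ne_top hμ hμ1 _ _).lt_top⟩⟩

theorem abs_measure_Ico_toReal_sub_le {x y : ℝ} (hxy : x ≤ y) :
    |(μ (Ico x y)).toReal - (y - x)| ≤ 1 := by
  set n := ⌊y - x⌋₊
  have hn : (n : ℝ) ≤ y - x := Nat.floor_le (sub_nonneg.2 hxy)
  have hn1 : y - x < n + 1 := Nat.lt_floor_add_one _
  have lo : (n : ℝ≥0∞) ≤ μ (Ico x y) := by
    rw [← measure_Ico_add_natCast hμ hμ1 x n]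
    exact measure_mono (Ico_subset_Ico_right (by linarith))
  have hi : μ (Ico x y) ≤ (n + 1 : ℕ) := by
    rw [← measure_Ico_add_natCast hμ hμ1 x (n + 1)]
    exact measure_mono (Ico_subset_Ico_right (by push_cast; linarith))
  have lo' := ENNReal.toReal_mono (measure_Ico_ne_top hμ hμ1 x y) lo
  have hi' := ENNReal.toReal_mono (ENNReal.natCast_ne_top _) hi
  rw [ENNReal.toReal_natCast] at lo' hi'
  push_cast at hi'
  rw [abs_le]; constructor <;> linarith

end PeriodicMeasure

theorem measurable_measure_Ico {α : Type*} [MeasurableSpace α] {μ : Measure ℝ} [SFinite μ]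
    {a b : α → ℝ} (ha : Measurable a) (hb : Measurable b) :
    Measurable fun x => μ (Ico (a x) (b x)) :=
  measurable_measure_prodMk_left (s := {p : α × ℝ | a p.1 ≤ p.2 ∧ p.2 < b p.1})
    ((measurableSet_le (ha.comp measurable_fst) measurable_snd).inter
      (measurableSet_lt measurable_snd (hb.comp measurable_fst)))

theorem Function.Periodic.measurable_lift {T : ℝ} {φ : ℝ → ℝ} (hφ : Periodic φ T)
    (hφm : Measurable φ) : Measurable hφ.lift :=
  measurable_from_quotient.2 hφm

theorem AddCircle.measurable_of_semiconj {T : ℝ} {f : ℝ → ℝ} {g : AddCircle T → AddCircle T}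
    (hfg : Semiconj ((↑) : ℝ → AddCircle T) f g) (hf : Measurable f) : Measurable g := by
  refine measurable_from_quotient.2 ?_
  have : g ∘ Quotient.mk'' = ((↑) : ℝ → AddCircle T) ∘ f := funext fun y => (hfg y).symm
  rw [this]
  exact AddCircle.measurable_mk'.comp hf

theorem integral_comp_eq_of_semiconj {T : ℝ} {P : Measure ℝ} {f : ℝ → ℝ}
    {g : AddCircle T → AddCircle T} (hfg : Semiconj ((↑) : ℝ → AddCircle T) f g)
    (hg : MeasurePreserving g (P.map (↑)) (P.map (↑))) {φ : ℝ → ℝ} (hφ : Periodic φ T)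
    (hφm : Measurable φ) : ∫ y, φ (f y) ∂P = ∫ y, φ y ∂P := by
  have hπ : Measurable ((↑) : ℝ → AddCircle T) := AddCircle.measurable_mk'
  have hlift := hφ.measurable_lift hφm
  have hφf : ∀ y, φ (f y) = hφ.lift (g y) := fun y => by rw [← hfg y]; rfl
  calc ∫ y, φ (f y) ∂P = ∫ z, hφ.lift (g z) ∂(P.map (↑)) := by
        simp_rw [hφf]
        exact (integral_map hπ.aemeasurable (hlift.comp hg.measurable).aestronglyMeasurable).symm
    _ = ∫ z, hφ.lift z ∂(P.map (↑)) := by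
        conv_rhs => rw [← hg.map_eq]
        rw [integral_map hg.measurable.aemeasurable hlift.aestronglyMeasurable]
    _ = ∫ y, φ y ∂P := integral_map hπ.aemeasurable hlift.aestronglyMeasurable

theorem abs_integral_sub_le_of_ae {α : Type*} [MeasurableSpace α] {P : Measure α}
    [IsProbabilityMeasure P] {φ : α → ℝ} (hφ : AEStronglyMeasurable φ P) {c C : ℝ}
    (h : ∀ᵐ x ∂P, |φ x - c| ≤ C) : |∫ x, φ x ∂P - c| ≤ C := by
  have hint : Integrable φ P := Integrable.of_bound hφ (|c| + C) (h.mono fun x hx => by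
    rw [Real.norm_eq_abs]; linarith [abs_sub_abs_le_abs_sub (φ x) c])
  have h' : ∀ᵐ x ∂P, ‖φ x - c‖ ≤ C := h
  simpa [integral_sub hint (integrable_const c)] using norm_integral_le_of_norm_le_const h'

section CircleMapLift

variable {μ : Measure ℝ} (hμ : ∀ s : Set ℝ, μ ((· + 1) ⁻¹' s) = μ s) {f : ℝ → ℝ}
include hμ

theorem periodic_measure_Ico_toReal (hf1 : ∀ y, f (y + 1) = f y + 1) :
    Periodic (fun y => (μ (Ico y (f y))).toReal) 1 := by
  intro y
  simp only [hf1]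
  exact_mod_cast congrArg ENNReal.toReal (measure_Ico_add_intCast hμ 1 y (f y))

variable (hμ1 : μ (Ico 0 1) = 1)
include hμ1

theorem sum_measure_Ico_iterate_toReal (hle : ∀ y, y ≤ f y) (n : ℕ) (y : ℝ) :
    ∑ k ∈ Finset.range n, (μ (Ico (f^[k] y) (f (f^[k] y)))).toReal =
      (μ (Ico y (f^[n] y))).toReal := by
  rw [← ENNReal.toReal_sum fun _ _ => measure_Ico_ne_top hμ hμ1 _ _]
  have hu : Monotone fun k => f^[k] y :=
    monotone_nat_of_le_succ fun k => by rw [iterate_succ_apply']; exact hle _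
  simpa only [iterate_succ_apply', iterate_zero_apply] using
    congrArg ENNReal.toReal (hu.sum_measure_Ico (μ := μ) n)

theorem abs_measure_Ico_iterate_sub_le (hf : Monotone f) (hf1 : ∀ y, f (y + 1) = f y + 1)
    (hle : ∀ y, y ≤ f y) (n : ℕ) {y : ℝ} (hy : y ∈ Ico 0 1) :
    |(μ (Ico y (f^[n] y))).toReal - f^[n] 0| ≤ 2 := by
  have hyn : y ≤ f^[n] y := id_le_iterate_of_id_le hle n y
  have hμy := abs_measure_Ico_toReal_sub_le hμ hμ1 hyn
  have h0 : f^[n] 0 ≤ f^[n] y := hf.iterate n hy.1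
  have h1 : f^[n] y ≤ f^[n] 0 + 1 := by
    have hcomm : f^[n] (0 + 1) = f^[n] 0 + 1 :=
      (show Function.Commute f (· + 1) from hf1).iterate_left n 0
    rw [← hcomm, zero_add]
    exact hf.iterate n hy.2.le
  rw [abs_le] at hμy ⊢
  constructor <;> linarith [hy.1, hy.2]

theorem integral_measure_Ico_iterate (hf : Monotone f) (hf1 : ∀ y, f (y + 1) = f y + 1)
    (hle : ∀ y, y ≤ f y) (hle1 : ∀ y, f y ≤ y + 1) {P : Measure ℝ} [IsFiniteMeasure P]
    {g : UnitAddCircle → UnitAddCircle} (hfg : Semiconj ((↑) : ℝ → UnitAddCircle) f g)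
    (hg : MeasurePreserving g (P.map (↑)) (P.map (↑))) (n : ℕ) :
    ∫ y, (μ (Ico y (f^[n] y))).toReal ∂P = n * ∫ y, (μ (Ico y (f y))).toReal ∂P := by
  have := isLocallyFiniteMeasure_of_periodic hμ hμ1
  set G := fun y => (μ (Ico y (f y))).toReal
  have hGm : Measurable G := (measurable_measure_Ico measurable_id hf.measurable).ennreal_toReal
  have hG1 : ∀ y, G y ≤ 1 := fun y => by
    have : μ (Ico y (f y)) ≤ μ (Ico y (y + 1)) := measure_mono (Ico_subset_Ico_right (hle1 y))
    rw [measure_Ico_add_one hμ, hμ1] at this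
    simpa using ENNReal.toReal_mono ENNReal.one_ne_top this
  have hint : ∀ k, Integrable (fun y => G (f^[k] y)) P := fun k =>
    Integrable.of_bound (hGm.comp (hf.iterate k).measurable).aestronglyMeasurable 1
      (ae_of_all _ fun y => by rw [Real.norm_of_nonneg ENNReal.toReal_nonneg]; exact hG1 _)
  have hinv : ∀ k, ∫ y, G (f^[k] y) ∂P = ∫ y, G y ∂P := fun k =>
    integral_comp_eq_of_semiconj (hfg.iterate_right k) (hg.iterate k)
      (periodic_measure_Ico_toReal hμ hf1) hGm
  simp_rw [← sum_measure_Ico_iterate_toReal hμ hμ1 hle n]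
  rw [integral_finsetSum _ fun k _ => hint k]
  simp [hinv]

theorem abs_integral_measure_Ico_iterate_sub_le (hf : Monotone f)
    (hf1 : ∀ y, f (y + 1) = f y + 1) (hle : ∀ y, y ≤ f y) {P : Measure ℝ} [IsProbabilityMeasure P]
    (hP : ∀ᵐ y ∂P, y ∈ Ico 0 1) (n : ℕ) :
    |∫ y, (μ (Ico y (f^[n] y))).toReal ∂P - f^[n] 0| ≤ 2 := by
  have := isLocallyFiniteMeasure_of_periodic hμ hμ1
  refine abs_integral_sub_le_of_ae ?_
    (hP.mono fun y hy => abs_measure_Ico_iterate_sub_le hμ hμ1 hf hf1 hle n hy)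
  exact (measurable_measure_Ico measurable_id (hf.iterate n).measurable).ennreal_toReal
    |>.aestronglyMeasurable

end CircleMapLift

theorem tendsto_div_natCast_of_abs_mul_sub_le {u : ℕ → ℝ} {a C : ℝ}
    (h : ∀ n : ℕ, |n * a - u n| ≤ C) : Tendsto (fun n : ℕ => u n / n) atTop (𝓝 a) := by
  rw [tendsto_iff_dist_tendsto_zero]
  refine squeeze_zero' (Eventually.of_forall fun n => dist_nonneg) ?_
    (tendsto_const_div_atTop_nhds_zero_nat C)
  filter_upwards [eventually_gt_atTop 0] with n hn
  have hn' : (0 : ℝ) < n := Nat.cast_pos.2 hn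
  rw [Real.dist_eq, show u n / n - a = -(n * a - u n) / n by field_simp; ring, abs_div, abs_neg,
    abs_of_pos hn']
  exact div_le_div_of_nonneg_right (h n) hn'.le

theorem stmt7_general (g : UnitAddCircle → UnitAddCircle) (gL : ℝ → ℝ)
    (hmono : StrictMono gL)
    (hper : ∀ y : ℝ, gL (y + 1) = gL y + 1)
    (hcomm : ∀ y : ℝ, ((gL y : ℝ) : UnitAddCircle) = g (y : UnitAddCircle))
    (hnofix : ∀ y : ℝ, y < gL y ∧ gL y < y + 1)
    (ν₁ ν₂ : Measure UnitAddCircle) [IsProbabilityMeasure ν₁] [IsProbabilityMeasure ν₂]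
    (hinv : Measure.map g ν₁ = ν₁)
    (ν₁L ν₂L : Measure ℝ) (hlift₁ : IsLift ν₁ ν₁L) (hlift₂ : IsLift ν₂ ν₂L)
    (ρ : ℝ) (hρ : ∀ x : ℝ, Tendsto (fun n => (gL^[n] x - x) / n) atTop (𝓝 ρ)) :
    ∫ y in Ico (0:ℝ) 1, (ν₂L (Ico y (gL y))).toReal ∂ν₁L = ρ := by
  set P := ν₁L.restrict (Ico 0 1)
  have hle y : y ≤ gL y := (hnofix y).1.le
  have hone₂ := hlift₂.measure_Ico_zero_one
  have : IsProbabilityMeasure P :=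
    ⟨by rw [Measure.restrict_apply_univ, hlift₁.measure_Ico_zero_one]⟩
  have hg : MeasurePreserving g (P.map (↑)) (P.map (↑)) := by
    rw [hlift₁.2]
    exact ⟨AddCircle.measurable_of_semiconj hcomm hmono.monotone.measurable, hinv⟩
  have hbound (n : ℕ) : |n * ∫ y, (ν₂L (Ico y (gL y))).toReal ∂P - gL^[n] 0| ≤ 2 := by
    rw [← integral_measure_Ico_iterate hlift₂.1 hone₂ hmono.monotone hper hle
      (fun y => (hnofix y).2.le) hcomm hg n]
    exact abs_integral_measure_Ico_iterate_sub_le hlift₂.1 hone₂ hmono.monotone hper hle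
      (ae_restrict_mem measurableSet_Ico) n
  exact tendsto_nhds_unique (tendsto_div_natCast_of_abs_mul_sub_le hbound) (by simpa using hρ 0)

theorem stmt7 (g : UnitAddCircle → UnitAddCircle) (gL : ℝ → ℝ)
    (hmono : StrictMono gL) (hcont : Continuous gL)
    (hper : ∀ y : ℝ, gL (y + 1) = gL y + 1)
    (hcomm : ∀ y : ℝ, ((gL y : ℝ) : UnitAddCircle) = g (y : UnitAddCircle))
    (hnofix : ∀ y : ℝ, y < gL y ∧ gL y < y + 1)
    (ν₁ ν₂ : Measure UnitAddCircle) [IsProbabilityMeasure ν₁] [IsProbabilityMeasure ν₂]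
    (hinv : Measure.map g ν₁ = ν₁)
    (ν₁L ν₂L : Measure ℝ) (hlift₁ : IsLift ν₁ ν₁L) (hlift₂ : IsLift ν₂ ν₂L)
    (ρ : ℝ) (hρ : ∀ x : ℝ, Tendsto (fun n => (gL^[n] x - x) / n) atTop (𝓝 ρ)) :
    ∫ y in Ico (0:ℝ) 1, (ν₂L (Ico y (gL y))).toReal ∂ν₁L = ρ :=
  stmt7_general g gL hmono hper hcomm hnofix ν₁ ν₂ hinv ν₁L ν₂L hlift₁ hlift₂ ρ hρ
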